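/- arXiv:1710.09768 — 3 statements merged into one kernel-verified Lean document; each statement's English description precedes it below -/
import Mathlib

section
/- At the maximal scale (ρk, ρl) = (1,1), the population local covariance equals the distance covariance of Székely–Rizzo–Bakirov: dCov^{1,1}(X,Y) = E(‖X−X'‖·‖Y−Y'‖) + E(‖X−X'‖)·E(‖Y−Y'‖) − 2·E(‖X−X'‖·‖Y−Y''‖), where (X,Y), (X',Y'), (X'',Y'') are i.i.d. with law F_{XY}. -/
open MeasureTheory ProbabilityTheory Filter Metric
open scoped Classical ProbabilityTheory

noncomputable section

/-- Euclidean space ℝ^p. -/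
abbrev Euc (p : ℕ) := EuclideanSpace ℝ (Fin p)

/-- The indicator `1{μ(closedBall(x, ‖x'−x‖)) ≤ ρ}`. -/
def locInd {p : ℕ} (μ : Measure (Euc p)) (ρ : ℝ) (x x' : Euc p) : ℝ :=
  if (μ (Metric.closedBall x (dist x' x))).toReal ≤ ρ then 1 else 0

/-- The truncated distance difference `(‖x−x'‖ − ‖x−x''‖)·I^ρ_{x,x'}`. -/
def dLoc {p : ℕ} (μ : Measure (Euc p)) (ρ : ℝ) (x x' x'' : Euc p) : ℝ :=
  (dist x x' - dist x x'') * locInd μ ρ x x'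

variable {Ω : Type*} [MeasureSpace Ω] {p q : ℕ}

/-- Population local covariance `dCov^{ρk,ρl}(X,Y)`, built from four iid copies
`Z 0, Z 1, Z 2, Z 3` of `(X,Y)`:
`E(d^{ρk}_X · d^{ρl}_{Y'}) − E(d^{ρk}_X)·E(d^{ρl}_{Y'})`. -/
def dCovPop (Z : Fin 4 → Ω → Euc p × Euc q) (ρk ρl : ℝ) : ℝ :=
  (∫ ω, dLoc (Measure.map (fun ω' => (Z 0 ω').1) ℙ) ρk (Z 0 ω).1 (Z 1 ω).1 (Z 2 ω).1 *
        dLoc (Measure.map (fun ω' => (Z 0 ω').2) ℙ) ρl (Z 1 ω).2 (Z 0 ω).2 (Z 3 ω).2) -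
  (∫ ω, dLoc (Measure.map (fun ω' => (Z 0 ω').1) ℙ) ρk (Z 0 ω).1 (Z 1 ω).1 (Z 2 ω).1) *
  (∫ ω, dLoc (Measure.map (fun ω' => (Z 0 ω').2) ℙ) ρl (Z 1 ω).2 (Z 0 ω).2 (Z 3 ω).2)

/-- Population local variance `dVar^{ρ}(X) = dCov^{ρ,ρ}(X,X)`, built from four iid copies
`W 0, …, W 3` of `X`. -/
def dVarPop (W : Fin 4 → Ω → Euc p) (ρ : ℝ) : ℝ :=
  (∫ ω, dLoc (Measure.map (W 0) ℙ) ρ (W 0 ω) (W 1 ω) (W 2 ω) *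
        dLoc (Measure.map (W 0) ℙ) ρ (W 1 ω) (W 0 ω) (W 3 ω)) -
  (∫ ω, dLoc (Measure.map (W 0) ℙ) ρ (W 0 ω) (W 1 ω) (W 2 ω)) *
  (∫ ω, dLoc (Measure.map (W 0) ℙ) ρ (W 1 ω) (W 0 ω) (W 3 ω))

/-- Population local correlation `dCorr^{ρk,ρl}(X,Y)`. -/
def dCorrPop (Z : Fin 4 → Ω → Euc p × Euc q) (ρk ρl : ℝ) : ℝ :=
  dCovPop Z ρk ρl /
    Real.sqrt (dVarPop (fun i ω => (Z i ω).1) ρk * dVarPop (fun i ω => (Z i ω).2) ρl)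

/-- The domain `S_ε` of local scales. -/
def Sset (Z : Fin 4 → Ω → Euc p × Euc q) (ε : ℝ) : Set (ℝ × ℝ) :=
  {ρ | ρ ∈ Set.Icc (0:ℝ) 1 ×ˢ Set.Icc (0:ℝ) 1 ∧
    ε ≤ min (dVarPop (fun i ω => (Z i ω).1) ρ.1) (dVarPop (fun i ω => (Z i ω).2) ρ.2)}

/-- Population MGC `c*(X,Y)`: the supremum of local correlations over `S_ε`. -/
def cstar (Z : Fin 4 → Ω → Euc p × Euc q) (ε : ℝ) : ℝ :=
  sSup ((fun ρ : ℝ × ℝ => dCorrPop Z ρ.1 ρ.2) '' Sset Z ε)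

open scoped ENNReal

/-! At scale one every indicator equals one, so `d_X = ‖X−X'‖ − ‖X−X''‖` and
`d_{Y'} = ‖Y'−Y‖ − ‖Y'−Y'''‖`. The latter has mean zero because `(Y', Y)` and `(Y', Y''')` have
the same law, and expanding `E(d_X d_{Y'})` leaves four terms. Any three of the copies are i.i.d.,
so relabelling identifies both cross terms with `E‖X−X'‖‖Y−Y''‖`, while the term built from the
disjoint pairs `(X, X'')` and `(Y', Y''')` factors by independence. -/

lemma dLoc_one {p : ℕ} (μ : Measure (Euc p)) [IsZeroOrProbabilityMeasure μ] (x x' x'' : Euc p) :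
    dLoc μ 1 x x' x'' = dist x x' - dist x x'' := by
  have hball : (μ (closedBall x (dist x' x))).toReal ≤ 1 :=
    ENNReal.toReal_le_of_le_ofReal zero_le_one (by simpa using prob_le_one)
  rw [dLoc, locInd, if_pos hball, mul_one]

lemma MeasureTheory.MemLp.dist {α E : Type*} {m : MeasurableSpace α} {μ : Measure α}
    [NormedAddCommGroup E] {p : ℝ≥0∞} {f g : α → E} (hf : MemLp f p μ) (hg : MemLp g p μ) :
    MemLp (fun x => dist (f x) (g x)) p μ := by
  simpa only [dist_eq_norm, Pi.sub_apply] using (hf.sub hg).norm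

lemma MeasureTheory.integral_sub_mul_sub {α : Type*} {m : MeasurableSpace α} {μ : Measure α}
    {f g u v : α → ℝ} (hf : MemLp f 2 μ) (hg : MemLp g 2 μ) (hu : MemLp u 2 μ)
    (hv : MemLp v 2 μ) :
    ∫ x, (f x - g x) * (u x - v x) ∂μ =
      ∫ x, f x * u x ∂μ - ∫ x, f x * v x ∂μ - ∫ x, g x * u x ∂μ + ∫ x, g x * v x ∂μ := by
  have hfu : Integrable (fun x => f x * u x) μ := hf.integrable_mul hu
  have hfv : Integrable (fun x => f x * v x) μ := hf.integrable_mul hv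
  have hgu : Integrable (fun x => g x * u x) μ := hg.integrable_mul hu
  have hgv : Integrable (fun x => g x * v x) μ := hg.integrable_mul hv
  simp only [mul_sub, sub_mul]
  rw [integral_sub (f := fun x => f x * u x - g x * u x) (g := fun x => f x * v x - g x * v x)
      (hfu.sub hgu) (hfv.sub hgv),
    integral_sub hfu hgu, integral_sub hfv hgv]
  ring

section IdenticallyDistributed

variable {Ω ι β : Type*} [MeasurableSpace Ω] {μ : Measure Ω} [MeasurableSpace β] {ν : Measure β}
  {Z : ι → Ω → β}

lemma memLp_dist_comp_of_map_eq {G : Type*} [NormedAddCommGroup G] [MeasurableSpace G]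
    [BorelSpace G] {π : β → G} (hπ : Measurable π) (hmeas : ∀ i, Measurable (Z i))
    (hid : ∀ i, μ.map (Z i) = ν) {p : ℝ≥0∞} {i₀ : ι} (h : MemLp (fun ω => π (Z i₀ ω)) p μ)
    (i j : ι) : MemLp (fun ω => dist (π (Z i ω)) (π (Z j ω))) p μ := by
  have hZ (i : ι) : IdentDistrib (Z i₀) (Z i) μ μ :=
    ⟨(hmeas i₀).aemeasurable, (hmeas i).aemeasurable, (hid i₀).trans (hid i).symm⟩
  exact (((hZ i).comp hπ).memLp_snd h).dist (((hZ j).comp hπ).memLp_snd h)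

variable [IsFiniteMeasure μ]

lemma ProbabilityTheory.iIndepFun.map_triple_eq_prod (hmeas : ∀ i, Measurable (Z i))
    (hindep : iIndepFun Z μ) (hid : ∀ i, μ.map (Z i) = ν) {i j k : ι} (hij : i ≠ j) (hik : i ≠ k)
    (hjk : j ≠ k) :
    μ.map (fun ω => (Z i ω, Z j ω, Z k ω)) = ν.prod (ν.prod ν) := by
  have hpair : μ.map (fun ω => (Z j ω, Z k ω)) = ν.prod ν := by
    rw [(hindep.indepFun hjk).map_prod_eq_prod_map_map (hmeas j).aemeasurable
      (hmeas k).aemeasurable, hid j, hid k]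
  rw [(hindep.indepFun_prodMk hmeas j k i hij.symm hik.symm).symm.map_prod_eq_prod_map_map
    (hmeas i).aemeasurable ((hmeas j).prodMk (hmeas k)).aemeasurable, hid i, hpair]

lemma ProbabilityTheory.iIndepFun.identDistrib_triple (hmeas : ∀ i, Measurable (Z i))
    (hindep : iIndepFun Z μ) (hid : ∀ i, μ.map (Z i) = ν) {i j k i' j' k' : ι} (hij : i ≠ j)
    (hik : i ≠ k) (hjk : j ≠ k) (hij' : i' ≠ j') (hik' : i' ≠ k') (hjk' : j' ≠ k') :
    IdentDistrib (fun ω => (Z i ω, Z j ω, Z k ω)) (fun ω => (Z i' ω, Z j' ω, Z k' ω)) μ μ where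
  aemeasurable_fst := ((hmeas i).prodMk ((hmeas j).prodMk (hmeas k))).aemeasurable
  aemeasurable_snd := ((hmeas i').prodMk ((hmeas j').prodMk (hmeas k'))).aemeasurable
  map_eq := by
    rw [hindep.map_triple_eq_prod hmeas hid hij hik hjk,
      hindep.map_triple_eq_prod hmeas hid hij' hik' hjk']

end IdenticallyDistributed

lemma ProbabilityTheory.iIndepFun.integral_comp_triple_eq {Ω β : Type*} [MeasurableSpace Ω]
    {μ : Measure Ω} [IsFiniteMeasure μ] [MeasurableSpace β] {ν : Measure β} {Z : Fin 4 → Ω → β}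
    (hmeas : ∀ i, Measurable (Z i)) (hindep : iIndepFun Z μ) (hid : ∀ i, μ.map (Z i) = ν)
    {φ : β × β × β → ℝ} (hφ : Measurable φ) (i j k : Fin 4) (hij : i ≠ j) (hik : i ≠ k)
    (hjk : j ≠ k) :
    ∫ ω, φ (Z i ω, Z j ω, Z k ω) ∂μ = ∫ ω, φ (Z 0 ω, Z 1 ω, Z 2 ω) ∂μ :=
  ((hindep.identDistrib_triple hmeas hid hij hik hjk (by decide) (by decide)
    (by decide)).comp hφ).integral_eq

section DistanceCovariance

variable {Ω E F : Type*} [MeasurableSpace Ω] {μ : Measure Ω} [IsFiniteMeasure μ]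
  [MeasurableSpace E] [NormedAddCommGroup F] [MeasurableSpace F] [BorelSpace F]
  [SecondCountableTopology F] {ν : Measure (E × F)} {Z : Fin 4 → Ω → E × F}

lemma integral_dist_snd_sub_dist_snd_eq_zero (hmeas : ∀ i, Measurable (Z i))
    (hindep : iIndepFun Z μ) (hid : ∀ i, μ.map (Z i) = ν) (hY : MemLp (fun ω => (Z 0 ω).2) 2 μ) :
    ∫ ω, dist (Z 1 ω).2 (Z 0 ω).2 - dist (Z 1 ω).2 (Z 3 ω).2 ∂μ = 0 := by
  have hdY := memLp_dist_comp_of_map_eq measurable_snd hmeas hid hY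
  have hY10 : ∫ ω, dist (Z 1 ω).2 (Z 0 ω).2 ∂μ = ∫ ω, dist (Z 0 ω).2 (Z 1 ω).2 ∂μ :=
    hindep.integral_comp_triple_eq hmeas hid (φ := fun z => dist z.1.2 z.2.1.2) (by fun_prop)
      1 0 2 (by decide) (by decide) (by decide)
  have hY13 : ∫ ω, dist (Z 1 ω).2 (Z 3 ω).2 ∂μ = ∫ ω, dist (Z 0 ω).2 (Z 1 ω).2 ∂μ :=
    hindep.integral_comp_triple_eq hmeas hid (φ := fun z => dist z.1.2 z.2.1.2) (by fun_prop)
      1 3 2 (by decide) (by decide) (by decide)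
  rw [integral_sub ((hdY 1 0).integrable one_le_two) ((hdY 1 3).integrable one_le_two), hY10,
    hY13, sub_self]

variable [NormedAddCommGroup E] [BorelSpace E] [SecondCountableTopology E]

lemma integral_dist_fst_mul_dist_snd_eq_mul (hmeas : ∀ i, Measurable (Z i))
    (hindep : iIndepFun Z μ) (hid : ∀ i, μ.map (Z i) = ν)
    (hX : MemLp (fun ω => (Z 0 ω).1) 2 μ) (hY : MemLp (fun ω => (Z 0 ω).2) 2 μ) :
    ∫ ω, dist (Z 0 ω).1 (Z 2 ω).1 * dist (Z 1 ω).2 (Z 3 ω).2 ∂μ =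
      (∫ ω, dist (Z 0 ω).1 (Z 1 ω).1 ∂μ) * ∫ ω, dist (Z 0 ω).2 (Z 1 ω).2 ∂μ := by
  have hind : IndepFun (fun ω => dist (Z 0 ω).1 (Z 2 ω).1) (fun ω => dist (Z 1 ω).2 (Z 3 ω).2) μ :=
    (hindep.indepFun_prodMk_prodMk hmeas 0 2 1 3 (by decide) (by decide) (by decide)
      (by decide)).comp (φ := fun z : (E × F) × (E × F) => dist z.1.1 z.2.1)
      (ψ := fun z : (E × F) × (E × F) => dist z.1.2 z.2.2) (by fun_prop) (by fun_prop)
  have hprod : ∫ ω, dist (Z 0 ω).1 (Z 2 ω).1 * dist (Z 1 ω).2 (Z 3 ω).2 ∂μ =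
      (∫ ω, dist (Z 0 ω).1 (Z 2 ω).1 ∂μ) * ∫ ω, dist (Z 1 ω).2 (Z 3 ω).2 ∂μ :=
    hind.integral_mul_eq_mul_integral
      (memLp_dist_comp_of_map_eq measurable_fst hmeas hid hX 0 2).aestronglyMeasurable
      (memLp_dist_comp_of_map_eq measurable_snd hmeas hid hY 1 3).aestronglyMeasurable
  rw [hprod, hindep.integral_comp_triple_eq hmeas hid (φ := fun z => dist z.1.1 z.2.1.1)
      (by fun_prop)
      0 2 1 (by decide) (by decide) (by decide),
    hindep.integral_comp_triple_eq hmeas hid (φ := fun z => dist z.1.2 z.2.1.2)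
      (by fun_prop)
      1 3 2 (by decide) (by decide) (by decide)]

lemma integral_distDiff_mul_distDiff_eq (hmeas : ∀ i, Measurable (Z i))
    (hindep : iIndepFun Z μ) (hid : ∀ i, μ.map (Z i) = ν)
    (hX : MemLp (fun ω => (Z 0 ω).1) 2 μ) (hY : MemLp (fun ω => (Z 0 ω).2) 2 μ) :
    ∫ ω, (dist (Z 0 ω).1 (Z 1 ω).1 - dist (Z 0 ω).1 (Z 2 ω).1) *
        (dist (Z 1 ω).2 (Z 0 ω).2 - dist (Z 1 ω).2 (Z 3 ω).2) ∂μ =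
      (∫ ω, dist (Z 0 ω).1 (Z 1 ω).1 * dist (Z 0 ω).2 (Z 1 ω).2 ∂μ) +
        (∫ ω, dist (Z 0 ω).1 (Z 1 ω).1 ∂μ) * (∫ ω, dist (Z 0 ω).2 (Z 1 ω).2 ∂μ) -
        2 * ∫ ω, dist (Z 0 ω).1 (Z 1 ω).1 * dist (Z 0 ω).2 (Z 2 ω).2 ∂μ := by
  have hdX := memLp_dist_comp_of_map_eq measurable_fst hmeas hid hX
  have hdY := memLp_dist_comp_of_map_eq measurable_snd hmeas hid hY
  have h01_10 : ∫ ω, dist (Z 0 ω).1 (Z 1 ω).1 * dist (Z 1 ω).2 (Z 0 ω).2 ∂μ =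
      ∫ ω, dist (Z 0 ω).1 (Z 1 ω).1 * dist (Z 0 ω).2 (Z 1 ω).2 ∂μ := by
    simp only [dist_comm (Z 1 _).2]
  have h01_13 : ∫ ω, dist (Z 0 ω).1 (Z 1 ω).1 * dist (Z 1 ω).2 (Z 3 ω).2 ∂μ =
      ∫ ω, dist (Z 0 ω).1 (Z 1 ω).1 * dist (Z 0 ω).2 (Z 2 ω).2 ∂μ := by
    simpa only [dist_comm (Z 1 _).1] using hindep.integral_comp_triple_eq hmeas hid
      (φ := fun z => dist z.2.1.1 z.1.1 * dist z.1.2 z.2.2.2) (by fun_prop)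
      1 0 3 (by decide) (by decide) (by decide)
  have h02_10 : ∫ ω, dist (Z 0 ω).1 (Z 2 ω).1 * dist (Z 1 ω).2 (Z 0 ω).2 ∂μ =
      ∫ ω, dist (Z 0 ω).1 (Z 1 ω).1 * dist (Z 0 ω).2 (Z 2 ω).2 ∂μ := by
    simpa only [dist_comm (Z 2 _).2] using hindep.integral_comp_triple_eq hmeas hid
      (φ := fun z => dist z.1.1 z.2.1.1 * dist z.2.2.2 z.1.2) (by fun_prop)
      0 2 1 (by decide) (by decide) (by decide)
  rw [integral_sub_mul_sub (hdX 0 1) (hdX 0 2) (hdY 1 0) (hdY 1 3), h01_10, h01_13, h02_10,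
    integral_dist_fst_mul_dist_snd_eq_mul hmeas hindep hid hX hY]
  ring

end DistanceCovariance

theorem dCovPop_one_one_eq_distanceCovariance_general {Ω : Type*} [MeasureSpace Ω]
    [IsProbabilityMeasure (ℙ : Measure Ω)] {p q : ℕ}
    (Z : Fin 4 → Ω → Euc p × Euc q) (hmeas : ∀ i, Measurable (Z i))
    (hindep : iIndepFun Z ℙ)
    (hid : ∀ i, Measure.map (Z i) ℙ = Measure.map (Z 0) ℙ)
    (hX2 : Integrable (fun ω => ‖(Z 0 ω).1‖ ^ 2) ℙ)
    (hY2 : Integrable (fun ω => ‖(Z 0 ω).2‖ ^ 2) ℙ) :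
    dCovPop Z 1 1 =
      (∫ ω, dist (Z 0 ω).1 (Z 1 ω).1 * dist (Z 0 ω).2 (Z 1 ω).2) +
        (∫ ω, dist (Z 0 ω).1 (Z 1 ω).1) * (∫ ω, dist (Z 0 ω).2 (Z 1 ω).2) -
        2 * ∫ ω, dist (Z 0 ω).1 (Z 1 ω).1 * dist (Z 0 ω).2 (Z 2 ω).2 := by
  have hX := (memLp_two_iff_integrable_sq_norm (hmeas 0).fst.aestronglyMeasurable).2 hX2
  have hY := (memLp_two_iff_integrable_sq_norm (hmeas 0).snd.aestronglyMeasurable).2 hY2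
  simp only [dCovPop, dLoc_one]
  rw [integral_dist_snd_sub_dist_snd_eq_zero hmeas hindep hid hY, mul_zero, sub_zero]
  exact integral_distDiff_mul_distDiff_eq hmeas hindep hid hX hY

/-- **Theorem 2, second part.** At the maximal scale `(ρk, ρl) = (1,1)`, the population local
covariance equals the distance covariance of Székely–Rizzo–Bakirov:
`dCov^{1,1}(X,Y) = E(‖X−X'‖‖Y−Y'‖) + E(‖X−X'‖)E(‖Y−Y'‖) − 2E(‖X−X'‖‖Y−Y''‖)`. -/
theorem dCovPop_one_one_eq_distanceCovariance {Ω : Type*} [MeasureSpace Ω]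
    [IsProbabilityMeasure (ℙ : Measure Ω)] {p q : ℕ} (hp : 0 < p) (hq : 0 < q)
    (Z : Fin 4 → Ω → Euc p × Euc q) (hmeas : ∀ i, Measurable (Z i))
    (hindep : iIndepFun Z ℙ)
    (hid : ∀ i, Measure.map (Z i) ℙ = Measure.map (Z 0) ℙ)
    (hX2 : Integrable (fun ω => ‖(Z 0 ω).1‖ ^ 2) ℙ)
    (hY2 : Integrable (fun ω => ‖(Z 0 ω).2‖ ^ 2) ℙ) :
    dCovPop Z 1 1 =
      (∫ ω, dist (Z 0 ω).1 (Z 1 ω).1 * dist (Z 0 ω).2 (Z 1 ω).2) +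
        (∫ ω, dist (Z 0 ω).1 (Z 1 ω).1) * (∫ ω, dist (Z 0 ω).2 (Z 1 ω).2) -
        2 * ∫ ω, dist (Z 0 ω).1 (Z 1 ω).1 * dist (Z 0 ω).2 (Z 2 ω).2 :=
  dCovPop_one_one_eq_distanceCovariance_general Z hmeas hindep hid hX2 hY2
end
end

section
/- For n ≥ 4, let v_n = n(n−3)/2 and let μ_n be the symmetric Beta distribution on (0,1) with both shape parameters equal to (v_n − 1)/2, i.e., the probability measure with density x^{(v_n−1)/2 − 1}(1−x)^{(v_n−1)/2 − 1}/B((v_n−1)/2, (v_n−1)/2) on (0,1). Define the quantile q_n = inf{t ∈ ℝ : μ_n((−∞, t]) ≥ 1 − 0.02/n} and the threshold τ_n = 2q_n − 1. Then τ_n = O(1/√n); in particular τ_n → 0 as n → ∞. -/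
/-!
The Beta(a, a) law has mean 1/2 and variance 1/(4(2a+1)), which for a = (v_n − 1)/2 equals
1/(2n(n−3)). By Chebyshev's inequality at distance t = 6/√n, each tail beyond 1/2 ± t carries
mass at most 1/(72(n−3)) ≤ 0.02/n once n ≥ 10, so the (1 − 0.02/n)-quantile lies within 6/√n
of 1/2 and |τ_n| ≤ 12/√n.
-/

open MeasureTheory Filter Asymptotics
open scoped Classical

noncomputable section

/-- The shape parameter `(v_n − 1)/2` with `v_n = n(n−3)/2`. -/
def betaShape (n : ℕ) : ℝ := ((n : ℝ) * ((n : ℝ) - 3) / 2 - 1) / 2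

/-- The symmetric Beta distribution on `(0,1)` with both shape parameters equal to
`betaShape n`, given by its density with respect to Lebesgue measure, where the normalizing
constant is the Beta function `B(a,a) = Γ(a)Γ(a)/Γ(a+a)`. -/
def betaMeasure (n : ℕ) : Measure ℝ :=
  (volume : Measure ℝ).withDensity fun x =>
    ENNReal.ofReal
      (Set.indicator (Set.Ioo (0:ℝ) 1)
        (fun x => x ^ (betaShape n - 1) * (1 - x) ^ (betaShape n - 1) /
          (Real.Gamma (betaShape n) * Real.Gamma (betaShape n) /
            Real.Gamma (betaShape n + betaShape n))) x)

/-- The quantile `q_n = inf{t : μ_n((−∞,t]) ≥ 1 − 0.02/n}`. -/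
def betaQuantile (n : ℕ) : ℝ :=
  sInf {t : ℝ | ENNReal.ofReal (1 - 0.02 / (n : ℝ)) ≤ betaMeasure n (Set.Iic t)}

/-- The MGC threshold `τ_n = 2q_n − 1`. -/
def tauThresh (n : ℕ) : ℝ := 2 * betaQuantile n - 1

open Set

namespace ProbabilityTheory

variable {α β : ℝ}

lemma integral_Ioo_rpow_mul_one_sub_rpow (hα : 0 < α) (hβ : 0 < β) :
    ∫ x in Ioo 0 1, x ^ (α - 1) * (1 - x) ^ (β - 1) = beta α β := by
  rw [beta_eq_betaIntegralReal α β hα hβ, Complex.betaIntegral,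
    intervalIntegral.integral_of_le zero_le_one, ← integral_Ioc_eq_integral_Ioo,
    ← RCLike.re_to_complex, ← integral_re]
  · refine setIntegral_congr_fun measurableSet_Ioc fun x ⟨hx0, hx1⟩ ↦ ?_
    norm_cast
    rw [← Complex.ofReal_cpow hx0.le, ← Complex.ofReal_cpow (sub_nonneg.2 hx1)]
    norm_cast
  · exact (Complex.betaIntegral_convergent (by simpa) (by simpa)).1

lemma beta_add_one_left (hα : 0 < α) (hβ : 0 < β) :
    beta (α + 1) β = α / (α + β) * beta α β := by
  have hαβ : 0 < α + β := add_pos hα hβ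
  rw [beta, beta, add_right_comm, Real.Gamma_add_one hα.ne', Real.Gamma_add_one hαβ.ne']
  have := (Real.Gamma_pos_of_pos hαβ).ne'
  field_simp

lemma betaPDF_toReal (hα : 0 < α) (hβ : 0 < β) (x : ℝ) :
    (betaPDF α β x).toReal = (Ioo 0 1).indicator
      (fun x ↦ x ^ (α - 1) * (1 - x) ^ (β - 1) / beta α β) x := by
  rw [betaPDF_eq, ENNReal.toReal_ofReal]
  · simp only [indicator_apply, mem_Ioo]
    split_ifs <;> ring
  · split_ifs with hx
    · have := beta_pos hα hβ
      have := Real.rpow_nonneg hx.1.le (α - 1)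
      have := Real.rpow_nonneg (sub_nonneg.2 hx.2.le) (β - 1)
      positivity
    · exact le_rfl

lemma integral_pow_betaMeasure (hα : 0 < α) (hβ : 0 < β) (k : ℕ) :
    ∫ x, x ^ k ∂betaMeasure α β = beta (α + k) β / beta α β := by
  rw [betaMeasure, integral_withDensity_eq_integral_toReal_smul (f := betaPDF α β)
    (measurable_betaPDFReal α β).ennreal_ofReal
    (.of_forall fun _ ↦ ENNReal.ofReal_lt_top)]
  have hpdf (x : ℝ) : (betaPDF α β x).toReal • x ^ k = (Ioo 0 1).indicator
      (fun x ↦ x ^ (α - 1) * (1 - x) ^ (β - 1) / beta α β * x ^ k) x := by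
    rw [betaPDF_toReal hα hβ, smul_eq_mul, indicator_mul_left]
  simp_rw [hpdf]
  rw [integral_indicator measurableSet_Ioo, ← integral_Ioo_rpow_mul_one_sub_rpow
    (by positivity : 0 < α + k) hβ, ← integral_div]
  refine setIntegral_congr_fun measurableSet_Ioo fun x ⟨hx0, _⟩ ↦ ?_
  rw [add_sub_right_comm, Real.rpow_add hx0, Real.rpow_natCast]
  ring

lemma integrable_pow_betaMeasure (hα : 0 < α) (hβ : 0 < β) (k : ℕ) :
    Integrable (fun x ↦ x ^ k) (betaMeasure α β) :=
  .of_integral_ne_zero <| by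
    rw [integral_pow_betaMeasure hα hβ]
    exact (div_pos (beta_pos (by positivity) hβ) (beta_pos hα hβ)).ne'

lemma integral_id_betaMeasure (hα : 0 < α) (hβ : 0 < β) :
    ∫ x, x ∂betaMeasure α β = α / (α + β) := by
  have := integral_pow_betaMeasure hα hβ 1
  simp only [pow_one, Nat.cast_one] at this
  rw [this, beta_add_one_left hα hβ, mul_div_cancel_right₀ _ (beta_pos hα hβ).ne']

lemma integral_sq_betaMeasure (hα : 0 < α) (hβ : 0 < β) :
    ∫ x, x ^ 2 ∂betaMeasure α β = α * (α + 1) / ((α + β) * (α + β + 1)) := by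
  rw [integral_pow_betaMeasure hα hβ, Nat.cast_two, show α + 2 = α + 1 + 1 by ring,
    beta_add_one_left (by positivity) hβ, beta_add_one_left hα hβ]
  have := (beta_pos hα hβ).ne'
  field_simp
  ring

lemma memLp_id_betaMeasure (hα : 0 < α) (hβ : 0 < β) : MemLp id 2 (betaMeasure α β) :=
  (memLp_two_iff_integrable_sq aestronglyMeasurable_id).2 (integrable_pow_betaMeasure hα hβ 2)

lemma variance_id_betaMeasure (hα : 0 < α) (hβ : 0 < β) :
    variance id (betaMeasure α β) = α * β / ((α + β) ^ 2 * (α + β + 1)) := by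
  have := isProbabilityMeasureBeta hα hβ
  rw [variance_eq_sub (memLp_id_betaMeasure hα hβ)]
  simp only [Pi.pow_apply, id_eq]
  rw [integral_sq_betaMeasure hα hβ, integral_id_betaMeasure hα hβ]
  field_simp
  ring

end ProbabilityTheory

open ProbabilityTheory

/-- Junk (`0`) unless the set is nonempty and bounded below, as for any `sInf` of reals. -/
def quantile (μ : Measure ℝ) (p : ℝ) : ℝ :=
  sInf {t | ENNReal.ofReal p ≤ μ (Iic t)}

section Quantile

variable {μ : Measure ℝ} {p x y t : ℝ}

lemma quantile_mem_Icc (hy : μ (Iic y) < ENNReal.ofReal p) (hx : ENNReal.ofReal p ≤ μ (Iic x)) :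
    quantile μ p ∈ Icc y x := by
  have hlower : y ∈ lowerBounds {t | ENNReal.ofReal p ≤ μ (Iic t)} := fun t ht ↦
    not_lt.1 fun hty ↦ (ht.trans (measure_mono (Iic_subset_Iic.2 hty.le))).not_gt hy
  exact ⟨le_csInf ⟨x, hx⟩ hlower, csInf_le ⟨y, hlower⟩ hx⟩

lemma measure_Iic_integral_sub_le [IsFiniteMeasure μ] (hμ : MemLp id 2 μ) (ht : 0 < t) :
    μ (Iic (μ[id] - t)) ≤ ENNReal.ofReal (variance id μ / t ^ 2) := by
  refine (measure_mono fun s hs ↦ ?_).trans (meas_ge_le_variance_div_sq hμ ht)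
  rw [mem_Iic] at hs
  rw [mem_ofPred_eq, id, abs_sub_comm, le_abs]
  left; linarith

lemma one_sub_le_measure_Iic_integral_add [IsProbabilityMeasure μ] (hμ : MemLp id 2 μ)
    (ht : 0 < t) : 1 - ENNReal.ofReal (variance id μ / t ^ 2) ≤ μ (Iic (μ[id] + t)) := by
  have htail : μ (Iic (μ[id] + t))ᶜ ≤ ENNReal.ofReal (variance id μ / t ^ 2) := by
    refine (measure_mono fun s hs ↦ ?_).trans (meas_ge_le_variance_div_sq hμ ht)
    rw [compl_Iic, mem_Ioi] at hs
    rw [mem_ofPred_eq, id, le_abs]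
    left; linarith
  calc 1 - ENNReal.ofReal (variance id μ / t ^ 2) ≤ 1 - μ (Iic (μ[id] + t))ᶜ :=
        tsub_le_tsub_left htail 1
    _ = μ (Iic (μ[id] + t)) := by
        rw [← prob_compl_eq_one_sub measurableSet_Iic.compl, compl_compl]

lemma abs_quantile_sub_integral_le [IsProbabilityMeasure μ] (hμ : MemLp id 2 μ) (ht : 0 < t)
    (hvar : variance id μ / t ^ 2 ≤ 1 - p) (hp : 1 / 2 < p) :
    |quantile μ p - μ[id]| ≤ t := by
  have hp1 : 0 ≤ 1 - p := (div_nonneg (variance_nonneg id μ) (sq_nonneg t)).trans hvar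
  have hlower : μ (Iic (μ[id] - t)) < ENNReal.ofReal p :=
    (measure_Iic_integral_sub_le hμ ht).trans_lt <|
      (ENNReal.ofReal_lt_ofReal_iff (by linarith)).2 (by linarith)
  have hupper : ENNReal.ofReal p ≤ μ (Iic (μ[id] + t)) := by
    refine le_trans ?_ (one_sub_le_measure_Iic_integral_add hμ ht)
    rw [← sub_sub_cancel 1 p, ENNReal.ofReal_sub 1 hp1, ENNReal.ofReal_one]
    exact tsub_le_tsub_left (ENNReal.ofReal_le_ofReal hvar) 1
  obtain ⟨h₁, h₂⟩ := quantile_mem_Icc hlower hupper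
  exact abs_sub_le_iff.2 ⟨by linarith, by linarith⟩

end Quantile

lemma betaMeasure_eq_betaMeasure_betaShape (n : ℕ) :
    _root_.betaMeasure n = ProbabilityTheory.betaMeasure (betaShape n) (betaShape n) := by
  unfold _root_.betaMeasure ProbabilityTheory.betaMeasure
  congr 1
  funext x
  rw [betaPDF_eq, indicator_apply, beta]
  simp only [mem_Ioo]
  split_ifs <;> ring_nf

lemma betaQuantile_eq_quantile (n : ℕ) :
    betaQuantile n = quantile (ProbabilityTheory.betaMeasure (betaShape n) (betaShape n))
      (1 - 0.02 / n) := by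
  rw [betaQuantile, betaMeasure_eq_betaMeasure_betaShape, quantile]

lemma abs_tauThresh_le {n : ℕ} (hn : 10 ≤ n) : |tauThresh n| ≤ 12 / √n := by
  have hn10 : (10 : ℝ) ≤ n := by exact_mod_cast hn
  set a := betaShape n with ha_def
  have ha : 0 < a := by rw [ha_def, betaShape]; nlinarith
  have := isProbabilityMeasureBeta ha ha
  have hmean : ∫ x, id x ∂ProbabilityTheory.betaMeasure a a = 1 / 2 := by
    simp only [id_eq]
    rw [integral_id_betaMeasure ha ha]
    field_simp
    ring
  have hvar : variance id (ProbabilityTheory.betaMeasure a a) / (6 / √n) ^ 2 ≤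
      1 - (1 - 0.02 / n) := by
    have h2a : a + a + 1 = n * (n - 3) / 2 := by rw [ha_def, betaShape]; ring
    rw [variance_id_betaMeasure ha ha, div_pow, Real.sq_sqrt (by positivity),
      show a * a / ((a + a) ^ 2 * (a + a + 1)) = 1 / (4 * (a + a + 1)) by field_simp; ring, h2a,
      div_le_iff₀ (by positivity)]
    field_simp
    rw [div_le_iff₀ (by linarith)]
    linarith
  have hp : 1 / 2 < 1 - 0.02 / (n : ℝ) := by
    have : (0.02 : ℝ) / n ≤ 0.02 / 10 := by gcongr
    linarith
  have hq := abs_quantile_sub_integral_le (memLp_id_betaMeasure ha ha) (by positivity) hvar hp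
  rw [hmean, ← betaQuantile_eq_quantile] at hq
  calc |tauThresh n| = 2 * |betaQuantile n - 1 / 2| := by
        rw [tauThresh, ← abs_two, ← abs_mul, abs_two]; ring_nf
    _ ≤ 2 * (6 / √n) := by gcongr
    _ = 12 / √n := by ring

/-- **Corollary 3 (threshold choice).** The threshold `τ_n = 2F⁻¹_z(1 − 0.02/n) − 1` satisfies
`τ_n = O(1/√n)`; in particular `τ_n → 0` as `n → ∞`. -/
theorem tauThresh_isBigO_and_tendsto_zero :
    (fun n : ℕ => tauThresh n) =O[atTop] (fun n : ℕ => 1 / Real.sqrt n) ∧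
      Tendsto tauThresh atTop (nhds 0) := by
  have hO : (fun n : ℕ => tauThresh n) =O[atTop] (fun n : ℕ => 1 / Real.sqrt n) :=
    IsBigO.of_bound 12 <| (eventually_ge_atTop 10).mono fun n hn ↦ by
      rw [Real.norm_eq_abs, norm_div, norm_one, Real.norm_of_nonneg (Real.sqrt_nonneg _),
        mul_one_div]
      exact abs_tauThresh_le hn
  refine ⟨hO, hO.trans_tendsto ?_⟩
  simpa [Function.comp_def] using
    tendsto_inv_atTop_zero.comp (Real.tendsto_sqrt_atTop.comp tendsto_natCast_atTop_atTop)
end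
end

section
/- The population local variance is translation invariant, orthogonally invariant, and scales quadratically: for any vector v ∈ ℝ^p, any scalar u ∈ ℝ, and any orthogonal p × p real matrix Q (i.e., QᵀQ = I), one has dVar^{ρ}(v + u·QX) = u² · dVar^{ρ}(X) for every ρ ∈ [0,1]. -/
open MeasureTheory ProbabilityTheory Filter Metric
open scoped Classical ProbabilityTheory

noncomputable section

variable {Ω : Type*} [MeasureSpace Ω] {p q : ℕ}

/-! The map `T x = v + u • Q x` multiplies every distance by `|u|`, and the law of `T X` is the
push-forward of `μ_X` by `T`. For `u ≠ 0`, `T` pulls the ball `closedBall (T x) (|u| * r)` back to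
`closedBall x r`, so every indicator `I^ρ` is unchanged while every distance difference is
multiplied by `|u|`; for `u = 0` all distance differences vanish. Both terms of `dVar^ρ` are
therefore multiplied by `u²`. -/

open Matrix in
open scoped RealInnerProductSpace in
theorem Matrix.norm_toEuclideanLin_of_transpose_mul_self {n : Type*} [Fintype n] [DecidableEq n]
    {Q : Matrix n n ℝ} (hQ : Qᵀ * Q = 1) (x : EuclideanSpace ℝ n) :
    ‖Q.toEuclideanLin x‖ = ‖x‖ := by
  have h : ⟪Q.toEuclideanLin x, Q.toEuclideanLin x⟫ = ⟪x, x⟫ := by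
    rw [← LinearMap.adjoint_inner_right, ← toEuclideanLin_conjTranspose_eq_adjoint,
      conjTranspose_eq_transpose_of_trivial, ← LinearMap.comp_apply, ← toLpLin_mul_same, hQ,
      toLpLin_one, LinearMap.id_apply]
  rw [norm_eq_sqrt_real_inner, norm_eq_sqrt_real_inner, h]

theorem dist_affine_toEuclideanLin {Q : Matrix (Fin p) (Fin p) ℝ} (hQ : Q.transpose * Q = 1)
    (v : Euc p) (u : ℝ) (x y : Euc p) :
    dist (v + u • Q.toEuclideanLin x) (v + u • Q.toEuclideanLin y) = |u| * dist x y := by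
  rw [dist_add_left, dist_smul₀, dist_eq_norm, dist_eq_norm, ← map_sub,
    Matrix.norm_toEuclideanLin_of_transpose_mul_self hQ, Real.norm_eq_abs]

section DistanceScaling

variable {X Y : Type*} [PseudoMetricSpace X] [PseudoMetricSpace Y] {T : X → Y} {c : ℝ}

theorem lipschitzWith_of_dist_eq_mul (hc : 0 ≤ c) (hT : ∀ x y, dist (T x) (T y) = c * dist x y) :
    LipschitzWith ⟨c, hc⟩ T :=
  LipschitzWith.of_dist_le_mul fun x y => (hT x y).le

theorem preimage_closedBall_of_dist_eq_mul (hc : 0 < c)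
    (hT : ∀ x y, dist (T x) (T y) = c * dist x y) (x : X) (r : ℝ) :
    T ⁻¹' closedBall (T x) (c * r) = closedBall x r := by
  ext y
  simp [hT, mul_le_mul_iff_right₀ hc]

end DistanceScaling

section LocalStatistics

variable {T : Euc p → Euc q} {c : ℝ}

theorem locInd_map_of_dist_eq_mul (hc : 0 < c) (hT : ∀ x y, dist (T x) (T y) = c * dist x y)
    (μ : Measure (Euc p)) (ρ : ℝ) (x x' : Euc p) :
    locInd (μ.map T) ρ (T x) (T x') = locInd μ ρ x x' := by
  have hTmeas := (lipschitzWith_of_dist_eq_mul hc.le hT).continuous.measurable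
  rw [locInd, locInd, hT, Measure.map_apply hTmeas measurableSet_closedBall,
    preimage_closedBall_of_dist_eq_mul hc hT]

theorem dLoc_map_of_dist_eq_mul (hc : 0 ≤ c) (hT : ∀ x y, dist (T x) (T y) = c * dist x y)
    (μ : Measure (Euc p)) (ρ : ℝ) (x x' x'' : Euc p) :
    dLoc (μ.map T) ρ (T x) (T x') (T x'') = c * dLoc μ ρ x x' x'' := by
  rcases hc.eq_or_lt with rfl | hc
  · simp [dLoc, hT]
  · rw [dLoc, dLoc, locInd_map_of_dist_eq_mul hc hT, hT, hT]
    ring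

theorem dVarPop_comp_of_dist_eq_mul (hc : 0 ≤ c) (hT : ∀ x y, dist (T x) (T y) = c * dist x y)
    (W : Fin 4 → Ω → Euc p) (hW : AEMeasurable (W 0)) (ρ : ℝ) :
    dVarPop (fun i ω => T (W i ω)) ρ = c ^ 2 * dVarPop W ρ := by
  have hTmeas := (lipschitzWith_of_dist_eq_mul hc hT).continuous.measurable
  have hmap : Measure.map (fun ω => T (W 0 ω)) ℙ = (Measure.map (W 0) ℙ).map T :=
    (AEMeasurable.map_map_of_aemeasurable hTmeas.aemeasurable hW).symm
  have hprod (a b : ℝ) : c * a * (c * b) = c ^ 2 * (a * b) := by ring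
  simp only [dVarPop, hmap, dLoc_map_of_dist_eq_mul hc hT, hprod, integral_const_mul]
  ring

end LocalStatistics

theorem dVarPop_affine_invariance_general {Ω : Type*} [MeasureSpace Ω] {p : ℕ}
    (W : Fin 4 → Ω → Euc p) (hmeas : ∀ i, Measurable (W i))
    (v : Euc p) (u : ℝ) (Q : Matrix (Fin p) (Fin p) ℝ) (hQ : Q.transpose * Q = 1) :
    ∀ ρ ∈ Set.Icc (0:ℝ) 1,
      dVarPop (fun i ω => v + u • (Matrix.toEuclideanLin Q) (W i ω)) ρ =
        u ^ 2 * dVarPop W ρ := by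
  intro ρ _
  rw [dVarPop_comp_of_dist_eq_mul (abs_nonneg u) (dist_affine_toEuclideanLin hQ v u) W
    (hmeas 0).aemeasurable ρ, sq_abs]

/-- **Theorem (Local Variances) (c).** For `v ∈ ℝ^p`, `u ∈ ℝ`, and an orthogonal matrix `Q`,
`dVar^{ρ}(v + u·QX) = u²·dVar^{ρ}(X)` for every `ρ ∈ [0,1]`. -/
theorem dVarPop_affine_invariance {Ω : Type*} [MeasureSpace Ω]
    [IsProbabilityMeasure (ℙ : Measure Ω)] {p : ℕ} (hp : 0 < p)
    (W : Fin 4 → Ω → Euc p) (hmeas : ∀ i, Measurable (W i))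
    (hindep : iIndepFun W ℙ)
    (hid : ∀ i, Measure.map (W i) ℙ = Measure.map (W 0) ℙ)
    (hX2 : Integrable (fun ω => ‖W 0 ω‖ ^ 2) ℙ)
    (v : Euc p) (u : ℝ) (Q : Matrix (Fin p) (Fin p) ℝ) (hQ : Q.transpose * Q = 1) :
    ∀ ρ ∈ Set.Icc (0:ℝ) 1,
      dVarPop (fun i ω => v + u • (Matrix.toEuclideanLin Q) (W i ω)) ρ =
        u ^ 2 * dVarPop W ρ :=
  dVarPop_affine_invariance_general W hmeas v u Q hQ
end
end
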